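/- arXiv:1803.09880 — 4 statements merged into one kernel-verified Lean document; each statement's English description precedes it below -/
import Mathlib

section
/- If every tournament on km+1 vertices contains a k-ary spanning tree, then every tournament on km vertices contains a k-ary spanning tree. -/
/-!
Add to a tournament on `k*m` vertices a sink, a new vertex beaten by all the others, and take a
`k`-ary spanning tree of the resulting tournament on `k*m+1` vertices. The sink has no children,
and it is not the root because the root has a child. The `k*m` non-root vertices are shared out
among their parents in groups of `k`, except at the exceptional vertex, whose number of children
is therefore also divisible by `k`: every vertex has `0` or `k` children. Deleting the sink leaves
a `k`-ary spanning tree of the original tournament, its parent becoming the exceptional vertex.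
-/

def IsTournament {V : Type*} (beats : V → V → Prop) : Prop :=
  (∀ v, ¬ beats v v) ∧ ∀ u v : V, u ≠ v → (beats u v ↔ ¬ beats v u)

def IsKAryTreeOn {V : Type*} [DecidableEq V] (beats : V → V → Prop) (k : ℕ)
    (S : Finset V) (root : V) (parent : V → V) : Prop :=
  root ∈ S ∧ (∀ v ∈ S, parent v ∈ S) ∧ parent root = root ∧
  (∀ v ∈ S, v ≠ root → beats (parent v) v) ∧
  (∀ v ∈ S, ∃ n : ℕ, parent^[n] v = root) ∧
  ∃ e ∈ S, (S.filter (fun w => w ≠ root ∧ parent w = e)).card ≤ k ∧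
    ∀ v ∈ S, v ≠ e →
      (S.filter (fun w => w ≠ root ∧ parent w = v)).card = k ∨
      (S.filter (fun w => w ≠ root ∧ parent w = v)).card = 0

def HasKArySpanningTree {V : Type*} [Fintype V] [DecidableEq V]
    (beats : V → V → Prop) (k : ℕ) : Prop :=
  ∃ (root : V) (parent : V → V), IsKAryTreeOn beats k Finset.univ root parent

section

variable {V : Type*} [DecidableEq V]

def treeChildren (S : Finset V) (root : V) (parent : V → V) (v : V) : Finset V :=
  S.filter (fun w => w ≠ root ∧ parent w = v)

theorem isKAryTreeOn_iff {beats : V → V → Prop} {k : ℕ} {S : Finset V} {root : V}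
    {parent : V → V} :
    IsKAryTreeOn beats k S root parent ↔
      root ∈ S ∧ (∀ v ∈ S, parent v ∈ S) ∧ parent root = root ∧
      (∀ v ∈ S, v ≠ root → beats (parent v) v) ∧
      (∀ v ∈ S, ∃ n : ℕ, parent^[n] v = root) ∧
      ∃ e ∈ S, (treeChildren S root parent e).card ≤ k ∧
        ∀ v ∈ S, v ≠ e →
          (treeChildren S root parent v).card = k ∨ (treeChildren S root parent v).card = 0 :=
  Iff.rfl

theorem sum_card_treeChildren {S : Finset V} {root : V} {parent : V → V} (hroot : root ∈ S)
    (hparent : ∀ v ∈ S, parent v ∈ S) :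
    ∑ v ∈ S, (treeChildren S root parent v).card = S.card - 1 := by
  rw [← Finset.card_erase_of_mem hroot,
    Finset.card_eq_sum_card_fiberwise (f := parent) (t := S)
      (fun v hv => hparent v (Finset.mem_of_mem_erase hv))]
  refine Finset.sum_congr rfl fun v _ => ?_
  rw [treeChildren, ← Finset.filter_ne', Finset.filter_filter]

namespace IsKAryTreeOn

variable {beats : V → V → Prop} {k : ℕ} {S : Finset V} {root : V} {parent : V → V}

theorem card_treeChildren_eq_or_eq_zero (h : IsKAryTreeOn beats k S root parent)
    (hdvd : k ∣ S.card - 1) {v : V} (hv : v ∈ S) :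
    (treeChildren S root parent v).card = k ∨ (treeChildren S root parent v).card = 0 := by
  obtain ⟨hroot, hparent, -, -, -, e, he, hek, hother⟩ := isKAryTreeOn_iff.mp h
  have hdvd_e : k ∣ (treeChildren S root parent e).card := by
    have hrest : k ∣ ∑ w ∈ S.erase e, (treeChildren S root parent w).card :=
      Finset.dvd_sum fun w hw => by
        rcases hother w (Finset.mem_of_mem_erase hw) (Finset.ne_of_mem_erase hw) with h | h <;>
          simp [h]
    rwa [← Nat.dvd_add_left hrest,
      Finset.add_sum_erase S (fun w => (treeChildren S root parent w).card) he,
      sum_card_treeChildren hroot hparent]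
  by_cases hve : v = e
  · subst hve
    rcases hek.lt_or_eq with hlt | heq
    exacts [Or.inr (Nat.eq_zero_of_dvd_of_lt hdvd_e hlt), Or.inl heq]
  · exact hother v hv hve

theorem parent_mem (h : IsKAryTreeOn beats k S root parent) {v : V} (hv : v ∈ S) :
    parent v ∈ S :=
  h.2.1 v hv

theorem treeChildren_eq_empty (h : IsKAryTreeOn beats k S root parent) {leaf : V}
    (hleaf : ∀ w, ¬ beats leaf w) : treeChildren S root parent leaf = ∅ :=
  Finset.filter_eq_empty_iff.mpr fun w hw ⟨hwroot, hpw⟩ =>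
    hleaf w (hpw ▸ h.2.2.2.1 w hw hwroot)

theorem exists_mem_treeChildren_root (h : IsKAryTreeOn beats k S root parent) {v : V}
    (hv : v ∈ S) (hvroot : v ≠ root) : (treeChildren S root parent root).Nonempty := by
  obtain ⟨-, hparent, -, -, hreach, -⟩ := isKAryTreeOn_iff.mp h
  by_contra hempty
  simp only [Finset.not_nonempty_iff_eq_empty, Finset.filter_eq_empty_iff, treeChildren] at hempty
  have hstay : ∀ n, parent^[n] v ∈ S ∧ parent^[n] v ≠ root := by
    intro n
    induction n with
    | zero => exact ⟨hv, hvroot⟩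
    | succ n ih =>
      rw [Function.iterate_succ_apply']
      exact ⟨hparent _ ih.1, fun hr => hempty ih.1 ⟨ih.2, hr⟩⟩
  obtain ⟨n, hn⟩ := hreach v hv
  exact (hstay n).2 hn

theorem erase_leaf (h : IsKAryTreeOn beats k S root parent)
    (hall : ∀ v ∈ S, (treeChildren S root parent v).card = k ∨
      (treeChildren S root parent v).card = 0)
    {leaf : V} (hleafS : leaf ∈ S) (hleafroot : leaf ≠ root)
    (hleaf : treeChildren S root parent leaf = ∅) :
    IsKAryTreeOn beats k (S.erase leaf) root parent := by
  obtain ⟨hroot, hparent, hfix, hbeats, hreach, -⟩ := isKAryTreeOn_iff.mp h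
  have hparent_ne : ∀ v ∈ S, parent v ≠ leaf := by
    intro v hv hvleaf
    by_cases hvroot : v = root
    · rw [hvroot, hfix] at hvleaf
      exact hleafroot hvleaf.symm
    · simpa [hleaf] using (show v ∈ treeChildren S root parent leaf by
        simp [treeChildren, hv, hvroot, hvleaf])
  have hchildren : ∀ v, treeChildren (S.erase leaf) root parent v =
      (treeChildren S root parent v).erase leaf := fun v => Finset.filter_erase _ _ _
  refine isKAryTreeOn_iff.mpr ⟨Finset.mem_erase.mpr ⟨hleafroot.symm, hroot⟩,
    fun v hv => Finset.mem_erase.mpr ⟨hparent_ne v (Finset.mem_of_mem_erase hv),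
      hparent v (Finset.mem_of_mem_erase hv)⟩,
    hfix, fun v hv => hbeats v (Finset.mem_of_mem_erase hv),
    fun v hv => hreach v (Finset.mem_of_mem_erase hv), parent leaf,
    Finset.mem_erase.mpr ⟨hparent_ne leaf hleafS, hparent leaf hleafS⟩, ?_,
    fun v hv hvne => ?_⟩
  · rw [hchildren]
    have := hall (parent leaf) (hparent leaf hleafS)
    have := Finset.card_erase_le (a := leaf) (s := treeChildren S root parent (parent leaf))
    omega
  · have hleaf_notMem : leaf ∉ treeChildren S root parent v := by
      simp [treeChildren, Ne.symm hvne]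
    rw [hchildren, Finset.erase_eq_of_notMem hleaf_notMem]
    exact hall v (Finset.mem_of_mem_erase hv)

theorem of_map {V' : Type*} [DecidableEq V'] {beats' : V' → V' → Prop} {parent' : V' → V'}
    (f : V ↪ V') (hbeats : ∀ u v, beats' (f u) (f v) → beats u v)
    (hparent : Function.Semiconj f parent parent')
    (h : IsKAryTreeOn beats' k (S.map f) (f root) parent') :
    IsKAryTreeOn beats k S root parent := by
  obtain ⟨hroot, hmaps, hfix, hbeats', hreach, e, he, hek, hother⟩ := isKAryTreeOn_iff.mp h
  have hmem : ∀ {v}, f v ∈ S.map f ↔ v ∈ S := Finset.mem_map' f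
  have hchildren : ∀ v, treeChildren (S.map f) (f root) parent' (f v) =
      (treeChildren S root parent v).map f := by
    intro v
    simp only [treeChildren, Finset.filter_map]
    congr 1
    refine Finset.filter_congr fun w _ => ?_
    simp [← hparent.eq w]
  obtain ⟨e, heS, rfl⟩ := Finset.mem_map.mp he
  refine isKAryTreeOn_iff.mpr ⟨hmem.mp hroot, fun v hv => ?_,
    f.injective ((hparent.eq root).trans hfix), fun v hv hvroot => ?_, fun v hv => ?_, e, heS, ?_,
    fun v hv hve => ?_⟩
  · exact hmem.mp (hparent.eq v ▸ hmaps (f v) (hmem.mpr hv))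
  · exact hbeats _ _ (hparent.eq v ▸ hbeats' (f v) (hmem.mpr hv) (f.injective.ne hvroot))
  · obtain ⟨n, hn⟩ := hreach (f v) (hmem.mpr hv)
    exact ⟨n, f.injective ((hparent.iterate_right n).eq v ▸ hn)⟩
  · simpa [hchildren] using hek
  · simpa [hchildren] using hother (f v) (hmem.mpr hv) (f.injective.ne hve)

end IsKAryTreeOn

end

def addSink {W : Type*} (beats : W → W → Prop) : Option W → Option W → Prop
  | some u, some v => beats u v
  | some _, none => True
  | none, _ => False

theorem IsTournament.addSink {W : Type*} {beats : W → W → Prop} (h : IsTournament beats) :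
    IsTournament (addSink beats) := by
  constructor
  · rintro (_ | v)
    exacts [id, h.1 v]
  · rintro (_ | u) (_ | v) huv <;> simp [_root_.addSink] at *
    exact h.2 u v huv

/-- If every tournament on `k*m+1` vertices has a `k`-ary spanning tree, then so
does every tournament on `k*m` vertices. -/
theorem stmt3 (k m : ℕ) (hk : 1 ≤ k) (hm : 1 ≤ m)
    (H : ∀ (W : Type) [Fintype W] [DecidableEq W], Fintype.card W = k * m + 1 →
      ∀ beats : W → W → Prop, IsTournament beats → HasKArySpanningTree beats k) :
    ∀ (W : Type) [Fintype W] [DecidableEq W], Fintype.card W = k * m →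
      ∀ beats : W → W → Prop, IsTournament beats → HasKArySpanningTree beats k := by
  intro W _ _ hcard beats hT
  obtain ⟨root', parent', htree⟩ :=
    H (Option W) (by rw [Fintype.card_option, hcard]) (addSink beats) hT.addSink
  have hsink_leaf : treeChildren Finset.univ root' parent' none = ∅ :=
    htree.treeChildren_eq_empty fun _ h => h
  have hroot : root' ≠ none := by
    rintro rfl
    obtain ⟨v⟩ : Nonempty W := Fintype.card_pos_iff.mp (by rw [hcard]; exact Nat.mul_pos hk hm)
    simpa [hsink_leaf] using
      htree.exists_mem_treeChildren_root (Finset.mem_univ (some v)) (Option.some_ne_none v)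
  obtain ⟨r, rfl⟩ := Option.ne_none_iff_exists'.mp hroot
  have htree' := htree.erase_leaf
    (fun _ hv => htree.card_treeChildren_eq_or_eq_zero (by simp [hcard]) hv)
    (Finset.mem_univ none) (by simp) hsink_leaf
  have hparent : ∀ v : W, ∃ u, parent' (some v) = some u := fun v =>
    Option.ne_none_iff_exists'.mp (Finset.mem_erase.mp (htree'.parent_mem (by simp))).1
  choose parent hparent using hparent
  have hsome : (Finset.univ : Finset W).map .some = Finset.univ.erase none := by
    ext (_ | _) <;> simp
  exact ⟨r, parent, IsKAryTreeOn.of_map .some (fun _ _ h => h) (fun v => (hparent v).symm)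
    (hsome ▸ htree')⟩
end

section
/- Let T be a tournament on n ≥ 2k+1 vertices, and let T_{≥k} be the set of vertices of out-degree at least k. If for every two distinct vertices u, v in T_{≥k} we have |(N⁺(u) ∪ N⁺(v)) \ {u,v}| ≤ 2k-2, then T contains no k-ary spanning tree. -/
/-
The children sets of a `k`-ary spanning tree partition the `n - 1 ≥ 2k` non-root vertices into
blocks of size `k`, except one block of size `< k`, so at least two vertices `u ≠ v` have exactly
`k` children. Children are out-neighbours, so both have out-degree `≥ k`, and their `2k` children
are distinct. Since `u` and `v` cannot be each other's parent (the root would be unreachable from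
them), at most one of `u, v` is among these children, so
`|(N⁺(u) ∪ N⁺(v)) \ {u, v}| ≥ 2k - 1`.
-/

open Finset

lemma Finset.one_lt_card_filter_eq_of_two_mul_le_sum {ι : Type*} [DecidableEq ι]
    {s : Finset ι} {f : ι → ℕ} {k : ℕ} {e : ι} (hk : 0 < k) (he : f e ≤ k)
    (hf : ∀ i ∈ s, i ≠ e → f i = k ∨ f i = 0) (hsum : 2 * k ≤ ∑ i ∈ s, f i) :
    1 < #{i ∈ s | f i = k} := by
  have hbound : ∑ i ∈ s, f i ≤ #{i ∈ s | f i = k} * k + (k - 1) :=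
    calc ∑ i ∈ s, f i
        ≤ ∑ i ∈ s, ((if f i = k then k else 0) + if i = e then k - 1 else 0) := by
          refine sum_le_sum fun i hi => ?_
          by_cases hik : f i = k
          · simp [hik]
          by_cases hie : i = e
          · subst hie; simp only [hik, if_true, if_false]; omega
          · simp [hie, (hf i hi hie).resolve_left hik]
      _ ≤ #{i ∈ s | f i = k} * k + (k - 1) := by
          rw [sum_add_distrib, sum_ite, sum_const_zero, sum_const, smul_eq_mul, add_zero,
            sum_ite_eq']
          gcongr
          split_ifs <;> omega
  by_contra! hle
  have : #{i ∈ s | f i = k} * k ≤ 1 * k := Nat.mul_le_mul_right k hle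
  omega

lemma Finset.pred_card_le_card_sdiff_pair {α : Type*} [DecidableEq α] {s : Finset α} {a b : α}
    (h : a ∉ s ∨ b ∉ s) : #s - 1 ≤ #(s \ {a, b}) := by
  rcases h with ha | hb
  · rw [sdiff_insert_of_notMem ha, sdiff_singleton_eq_erase]
    exact pred_card_le_card_erase
  · rw [pair_comm, sdiff_insert_of_notMem hb, sdiff_singleton_eq_erase]
    exact pred_card_le_card_erase

section Children

variable {V : Type*} [DecidableEq V]

def children (S : Finset V) (root : V) (parent : V → V) (v : V) : Finset V :=
  S.filter (fun w => w ≠ root ∧ parent w = v)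

variable {S : Finset V} {root : V} {parent : V → V}

lemma disjoint_children {u v : V} (huv : u ≠ v) :
    Disjoint (children S root parent u) (children S root parent v) := by
  rw [disjoint_left]
  intro w hu hv
  simp only [children, mem_filter] at hu hv
  exact huv (hu.2.2.symm.trans hv.2.2)

lemma sum_card_children (hroot : root ∈ S) (hpar : ∀ v ∈ S, parent v ∈ S) :
    ∑ v ∈ S, #(children S root parent v) = #S - 1 := by
  rw [← card_erase_of_mem hroot,
    card_eq_sum_card_fiberwise (f := parent) (t := S) fun w hw => hpar w (mem_of_mem_erase hw)]
  refine sum_congr rfl fun v _ => congrArg card ?_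
  ext w
  simp [children, and_assoc, and_left_comm]

variable {beats : V → V → Prop}

lemma children_subset_outNeighbors (hbeats : ∀ w ∈ S, w ≠ root → beats (parent w) w) (v : V) :
    (children S root parent v : Set V) ⊆ {w | beats v w} := by
  intro w hw
  simp only [children, coe_filter, Set.mem_ofPred_eq] at hw
  exact hw.2.2 ▸ hbeats w hw.1 hw.2.1

lemma notMem_children_self (hirrefl : ∀ v, ¬ beats v v)
    (hbeats : ∀ w ∈ S, w ≠ root → beats (parent w) w) (v : V) :
    v ∉ children S root parent v := fun hv =>
  hirrefl v (children_subset_outNeighbors hbeats v hv)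

end Children

lemma Function.iterate_eq_or_eq_of_swap {α : Type*} {f : α → α} {a b : α}
    (ha : f a = b) (hb : f b = a) (n : ℕ) : f^[n] a = a ∨ f^[n] a = b := by
  induction n with
  | zero => exact Or.inl rfl
  | succ n ih =>
    rw [Function.iterate_succ_apply']
    rcases ih with h | h <;> rw [h]
    exacts [Or.inr ha, Or.inl hb]

namespace IsKAryTreeOn

variable {V : Type*} [DecidableEq V] {beats : V → V → Prop} {k : ℕ} {S : Finset V} {root : V}
  {parent : V → V}

lemma mem_children_asymm (h : IsKAryTreeOn beats k S root parent) {u v : V}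
    (hu : u ∈ children S root parent v) : v ∉ children S root parent u := by
  intro hv
  simp only [children, mem_filter] at hu hv
  obtain ⟨n, hn⟩ := h.2.2.2.2.1 u hu.1
  rcases Function.iterate_eq_or_eq_of_swap hu.2.2 hv.2.2 n with h' | h' <;> rw [hn] at h'
  exacts [hu.2.1 h'.symm, hv.2.1 h'.symm]

lemma exists_ne_card_children_eq (h : IsKAryTreeOn beats k S root parent) (hk : 0 < k)
    (hS : 2 * k + 1 ≤ #S) :
    ∃ u ∈ S, ∃ v ∈ S, u ≠ v ∧
      #(children S root parent u) = k ∧ #(children S root parent v) = k := by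
  obtain ⟨hroot, hpar, -, -, -, e, -, he, hreg⟩ := h
  have hsum := sum_card_children hroot hpar
  have := one_lt_card_filter_eq_of_two_mul_le_sum (f := fun v => #(children S root parent v))
    hk he hreg (by omega)
  obtain ⟨u, hu, v, hv, huv⟩ := one_lt_card.mp this
  rw [mem_filter] at hu hv
  exact ⟨u, hu.1, v, hv.1, huv, hu.2, hv.2⟩

end IsKAryTreeOn

/-- Observation: if `n ≥ 2k+1` and any two distinct vertices of out-degree `≥ k`
have `|(N⁺(u) ∪ N⁺(v)) \ {u,v}| ≤ 2k-2`, then there is no `k`-ary spanning tree. -/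
theorem stmt4 {V : Type*} [Fintype V] [DecidableEq V]
    (beats : V → V → Prop) (hT : IsTournament beats) (k : ℕ) (hk : 1 ≤ k)
    (hn : 2 * k + 1 ≤ Fintype.card V)
    (hcond : ∀ u v : V, u ≠ v → k ≤ {w | beats u w}.ncard →
      k ≤ {w | beats v w}.ncard →
      (({w | beats u w} ∪ {w | beats v w}) \ {u, v}).ncard ≤ 2 * k - 2) :
    ¬ HasKArySpanningTree beats k := by
  rintro ⟨root, parent, htree⟩
  set C := children univ root parent
  have hbeats := htree.2.2.2.1
  obtain ⟨u, -, v, -, huv, hu, hv⟩ := htree.exists_ne_card_children_eq hk hn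
  have hdeg {x : V} (hx : #(C x) = k) : k ≤ {w | beats x w}.ncard := by
    rw [← hx, ← Set.ncard_coe_finset]
    exact Set.ncard_le_ncard (children_subset_outNeighbors hbeats x)
  have hupper : #((C u ∪ C v) \ {u, v}) ≤ 2 * k - 2 := by
    rw [← Set.ncard_coe_finset]
    refine le_trans (Set.ncard_le_ncard ?_) (hcond u v huv (hdeg hu) (hdeg hv))
    push_cast
    exact Set.sdiff_subset_sdiff_left (Set.union_subset_union
      (children_subset_outNeighbors hbeats u) (children_subset_outNeighbors hbeats v))
  have hself := notMem_children_self hT.1 hbeats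
  have hlower : #(C u ∪ C v) - 1 ≤ #((C u ∪ C v) \ {u, v}) := by
    refine pred_card_le_card_sdiff_pair ?_
    by_contra! h
    simp only [mem_union] at h
    exact htree.mem_children_asymm (h.1.resolve_left (hself u)) (h.2.resolve_right (hself v))
  rw [card_union_of_disjoint (disjoint_children huv), hu, hv] at hlower
  omega
end

section
/- Every tournament on 10 vertices contains a 4-ary spanning tree. -/
/-!
Let `a` be a vertex of maximum out-degree, with out-neighbourhood `N⁺` and in-neighbourhood
`N⁻`. The out-degrees sum to `45`, so `#N⁺ ≥ 5` and `#N⁻ ≤ 4`; and every `v ∈ N⁻` also beats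
`a`, so it beats fewer vertices of `N⁺ ∪ N⁻` than `a` does.

All trees built have one shape: a root `r`, a hub `h` with a set `G` of four children, one vertex
`x` below some `e`, and every other vertex a child of `r`. Either `a` is the root and the hub is
a vertex of `N⁺` beating all of `N⁻` but `x`, or the root is a vertex of `N⁻` beating all but at
most one vertex of `N⁻` and the hub is `a` with `G ⊆ N⁺`. Which one applies is decided by `#N⁻`
and the out-degrees inside `N⁻`; when `#N⁻ = 1` the hub `a` hangs below the vertex of `N⁻`, a
child of a root in `N⁺`.
-/

open Finset

section

variable {V : Type*} {beats : V → V → Prop}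

namespace IsTournament

theorem irrefl (hT : IsTournament beats) (v : V) : ¬ beats v v := hT.1 v

theorem asymm (hT : IsTournament beats) {u v : V} (h : beats u v) : ¬ beats v u := by
  obtain rfl | huv := eq_or_ne u v
  · exact hT.irrefl u
  · exact (hT.2 u v huv).1 h

theorem ne_of_beats (hT : IsTournament beats) {u v : V} (h : beats u v) : u ≠ v := by
  rintro rfl
  exact hT.irrefl u h

theorem beats_of_not_beats (hT : IsTournament beats) {u v : V} (huv : u ≠ v)
    (h : ¬ beats u v) : beats v u :=
  (hT.2 v u huv.symm).2 h

theorem beats_or_beats (hT : IsTournament beats) {u v : V} (huv : u ≠ v) :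
    beats u v ∨ beats v u :=
  or_iff_not_imp_left.2 (hT.beats_of_not_beats huv)

theorem exists_beats_of_one_lt_card (hT : IsTournament beats) {S : Finset V} (hS : 1 < #S) :
    ∃ e ∈ S, ∃ x ∈ S, beats e x := by
  obtain ⟨y, hy, z, hz, hyz⟩ := one_lt_card.1 hS
  rcases hT.beats_or_beats hyz with h | h
  exacts [⟨y, hy, z, hz, h⟩, ⟨z, hz, y, hy, h⟩]

variable [DecidableEq V] [DecidableRel beats]

theorem filter_beats_subset_erase_erase (hT : IsTournament beats) {S : Finset V} {r x : V}
    (hrx : ¬ beats r x) : S.filter (beats r) ⊆ (S.erase r).erase x := fun w hw => by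
  rw [mem_filter] at hw
  exact mem_erase.2
    ⟨fun h => hrx (h ▸ hw.2), mem_erase.2 ⟨(hT.ne_of_beats hw.2).symm, hw.1⟩⟩

theorem two_mul_sum_card_filter (hT : IsTournament beats) (S : Finset V) :
    2 * ∑ v ∈ S, #(S.filter (beats v)) = #S * (#S - 1) := by
  have hpair : ∀ v w : V, ((if beats v w then 1 else 0) + if beats w v then 1 else 0)
      = if v ≠ w then 1 else 0 := by
    intro v w
    obtain rfl | hvw := eq_or_ne v w
    · simp [hT.irrefl]
    · rcases hT.beats_or_beats hvw with h | h <;> simp [h, hT.asymm h, hvw]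
  calc 2 * ∑ v ∈ S, #(S.filter (beats v))
      = ∑ v ∈ S, ∑ w ∈ S, ((if beats v w then 1 else 0) + if beats w v then 1 else 0) := by
        simp only [card_filter, sum_add_distrib]
        rw [sum_comm (f := fun v w => if beats w v then 1 else 0)]
        ring
    _ = ∑ v ∈ S, #(S.erase v) := by
        refine sum_congr rfl fun v hv => ?_
        simp only [hpair, sum_boole, filter_ne, Nat.cast_id]
    _ = #S * (#S - 1) := by
        rw [sum_congr rfl fun v hv => card_erase_of_mem hv, sum_const, smul_eq_mul]

theorem card_le_two_mul_card_filter_add_one (hT : IsTournament beats) {S : Finset V} {v : V}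
    (hmax : ∀ u ∈ S, #(S.filter (beats u)) ≤ #(S.filter (beats v))) :
    #S ≤ 2 * #(S.filter (beats v)) + 1 := by
  have hsum := sum_le_card_nsmul S _ _ hmax
  have h2 := hT.two_mul_sum_card_filter S
  rw [smul_eq_mul] at hsum
  rcases Nat.eq_zero_or_pos #S with hS | hS
  · omega
  · have : #S * (#S - 1) ≤ #S * (2 * #(S.filter (beats v))) := by nlinarith
    have := Nat.le_of_mul_le_mul_left this hS
    omega

theorem exists_card_le_two_mul_card_filter_add_one (hT : IsTournament beats) {S : Finset V}
    (hS : S.Nonempty) : ∃ v ∈ S, #S ≤ 2 * #(S.filter (beats v)) + 1 :=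
  let ⟨v, hv, hmax⟩ := S.exists_max_image (fun u => #(S.filter (beats u))) hS
  ⟨v, hv, hT.card_le_two_mul_card_filter_add_one hmax⟩

theorem exists_subset_forall_beats (hT : IsTournament beats) {S : Finset V} {m : ℕ}
    (hm : 0 < m) (hS : 2 * m ≤ #S) :
    ∃ w ∈ S, ∃ F ⊆ S, #F = m ∧ ∀ f ∈ F, beats w f := by
  obtain ⟨w, hw, hdeg⟩ :=
    hT.exists_card_le_two_mul_card_filter_add_one (S := S) (card_pos.1 (by omega))
  obtain ⟨F, hFw, hF⟩ := exists_subset_card_eq (s := S.filter (beats w)) (n := m) (by omega)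
  exact ⟨w, hw, F, hFw.trans (filter_subset _ _), hF, fun f hf => (mem_filter.1 (hFw hf)).2⟩

end IsTournament

section Trees

variable [Fintype V] [DecidableEq V]

-- `h = x` is allowed: then `e` is the parent of the hub.
theorem hasKArySpanningTree_of_hub {k : ℕ} (hV : Fintype.card V = 2 * k + 2) (hk : 1 ≤ k)
    {r h e x : V} {G : Finset V} (hG : #G = k) (hrG : r ∉ G) (hxG : x ∉ G) (hhG : h ∉ G)
    (hrx : r ≠ x) (hhr : h ≠ r) (her : e ≠ r) (heh : e ≠ h) (hex : e ≠ x)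
    (hhx : e ∈ G → h ≠ x)
    (hr : ∀ v, v ≠ r → v ≠ x → v ∉ G → beats r v) (hh : ∀ g ∈ G, beats h g)
    (he : beats e x) :
    HasKArySpanningTree beats k := by
  set p : V → V := fun v => if v = x then e else if v ∈ G then h else r
  have children_r : univ.filter (fun w => w ≠ r ∧ p w = r) = (insert r (insert x G))ᶜ := by
    ext w; grind [mem_compl]
  have children_h : univ.filter (fun w => w ≠ r ∧ p w = h) = G := by
    ext w; grind
  have children_e : univ.filter (fun w => w ≠ r ∧ p w = e) = {x} := by
    ext w; grind
  have children_other : ∀ v, v ≠ r → v ≠ h → v ≠ e →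
      univ.filter (fun w => w ≠ r ∧ p w = v) = ∅ := by
    intro v _ _ _; ext w; grind
  have card_children_r : #(insert r (insert x G))ᶜ = k := by
    rw [card_compl, card_insert_of_notMem (by simp [hrx, hrG]), card_insert_of_notMem hxG]
    omega
  refine ⟨r, p, mem_univ r, fun _ _ => mem_univ _, by simp [p, hrx, hrG], ?_, ?_, e, mem_univ e,
    ?_, ?_⟩
  · intro v _ hvr
    simp only [p]
    split_ifs with hvx hvG
    · exact hvx ▸ he
    · exact hh v hvG
    · exact hr v hvr hvx hvG
  · intro v _
    refine ⟨3, ?_⟩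
    simp only [Function.iterate_succ_apply, Function.iterate_zero_apply, p]
    grind
  · rw [children_e, card_singleton]
    exact hk
  · intro v _ hve
    by_cases hvr : v = r
    · subst hvr
      exact .inl (by rw [children_r, card_children_r])
    by_cases hvh : v = h
    · subst hvh
      exact .inl (by rw [children_h, hG])
    · exact .inr (by rw [children_other v hvr hvh hve, card_empty])

end Trees

section Neighbourhoods

variable [Fintype V] [DecidableRel beats]

def outNbrs (beats : V → V → Prop) [DecidableRel beats] (v : V) : Finset V :=
  univ.filter (beats v)

def inNbrs (beats : V → V → Prop) [DecidableRel beats] (v : V) : Finset V :=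
  univ.filter (fun u => beats u v)

@[simp]
theorem mem_outNbrs {v w : V} : w ∈ outNbrs beats v ↔ beats v w := by simp [outNbrs]

@[simp]
theorem mem_inNbrs {v w : V} : w ∈ inNbrs beats v ↔ beats w v := by simp [inNbrs]

namespace IsTournament

theorem disjoint_outNbrs_inNbrs (hT : IsTournament beats) (a : V) :
    Disjoint (outNbrs beats a) (inNbrs beats a) :=
  disjoint_left.2 fun _ h₁ h₂ => hT.asymm (mem_outNbrs.1 h₁) (mem_inNbrs.1 h₂)

theorem mem_outNbrs_or_mem_inNbrs (hT : IsTournament beats) {a v : V} (hv : v ≠ a) :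
    v ∈ outNbrs beats a ∨ v ∈ inNbrs beats a := by
  simpa using hT.beats_or_beats hv.symm

variable [DecidableEq V]

theorem card_outNbrs_add_card_inNbrs (hT : IsTournament beats) (a : V) :
    #(outNbrs beats a) + #(inNbrs beats a) + 1 = Fintype.card V := by
  have hunion : outNbrs beats a ∪ inNbrs beats a = univ.erase a := by
    ext v
    simp only [mem_union, mem_erase, mem_univ, and_true]
    exact ⟨by rintro (h | h) rfl <;> simp_all [hT.irrefl], hT.mem_outNbrs_or_mem_inNbrs⟩
  rw [← card_union_of_disjoint (hT.disjoint_outNbrs_inNbrs a), hunion,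
    card_erase_of_mem (mem_univ a), card_univ]
  have := Fintype.card_pos_iff.2 ⟨a⟩
  omega

end IsTournament

end Neighbourhoods

namespace IsTournament

variable [Fintype V] [DecidableEq V] [DecidableRel beats] {k : ℕ} {a : V}

local notation "N⁺" => outNbrs beats a
local notation "N⁻" => inNbrs beats a

theorem card_filter_add_card_filter_lt (hT : IsTournament beats)
    (hmax : ∀ u, #(outNbrs beats u) ≤ #N⁺) {v : V} (hv : v ∈ N⁻) :
    #(N⁺.filter (beats v)) + #(N⁻.filter (beats v)) < #N⁺ := by
  have hsub : insert a ((N⁺ ∪ N⁻).filter (beats v)) ⊆ outNbrs beats v := by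
    intro w
    simp only [mem_insert, mem_filter, mem_outNbrs]
    rintro (rfl | ⟨-, h⟩)
    exacts [mem_inNbrs.1 hv, h]
  have ha : a ∉ (N⁺ ∪ N⁻).filter (beats v) := by simp [hT.irrefl]
  have := (card_le_card hsub).trans (hmax v)
  rwa [card_insert_of_notMem ha, filter_union,
    card_union_of_disjoint (disjoint_filter_filter (hT.disjoint_outNbrs_inNbrs a)),
    Nat.add_one_le_iff] at this

theorem exists_beats_of_mem_inNbrs (hT : IsTournament beats)
    (hmax : ∀ u, #(outNbrs beats u) ≤ #N⁺) {v : V} (hv : v ∈ N⁻) :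
    ∃ w ∈ N⁺, beats w v := by
  obtain ⟨w, hw, hvw⟩ := exists_mem_notMem_of_card_lt_card
    ((Nat.le_add_right _ _).trans_lt (hT.card_filter_add_card_filter_lt hmax hv))
  refine ⟨w, hw, hT.beats_of_not_beats ?_ fun h => hvw (mem_filter.2 ⟨hw, h⟩)⟩
  rintro rfl
  exact disjoint_right.1 (hT.disjoint_outNbrs_inNbrs a) hv hw

theorem hasKArySpanningTree_of_outNbr_hub (hT : IsTournament beats)
    (hV : Fintype.card V = 2 * k + 2) (hk : 1 ≤ k) {w m x : V} {F : Finset V}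
    (hw : w ∈ N⁺) (hm : m ∈ N⁻) (hx : x ∈ N⁻) (hmx : beats m x)
    (hwB : ∀ v ∈ N⁻, v ≠ x → beats w v) (hF : F ⊆ N⁺) (hwF : ∀ f ∈ F, beats w f)
    (hcard : #F + #N⁻ = k + 1) :
    HasKArySpanningTree beats k := by
  set G := N⁻.erase x ∪ F
  have hwG : ∀ g ∈ G, beats w g := by
    simp only [G, mem_union, mem_erase]
    rintro g (⟨hgx, hg⟩ | hg)
    exacts [hwB g hg hgx, hwF g hg]
  have hG : #G = k := by
    rw [card_union_of_disjoint (disjoint_of_subset_left (erase_subset _ _)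
      (disjoint_of_subset_right hF (hT.disjoint_outNbrs_inNbrs a).symm)), card_erase_of_mem hx]
    have := card_pos.2 ⟨x, hx⟩
    omega
  have haG : ∀ v, v ≠ a → v ≠ x → v ∉ G → beats a v := fun v hva hvx hvG =>
    by_contra fun h => hvG (mem_union_left _ (mem_erase.2
      ⟨hvx, mem_inNbrs.2 (hT.beats_of_not_beats hva.symm h)⟩))
  have hF' : ∀ f ∈ F, beats a f := fun f hf => mem_outNbrs.1 (hF hf)
  simp only [mem_outNbrs, mem_inNbrs] at hw hm hx hwB
  refine hasKArySpanningTree_of_hub (r := a) hV hk hG ?_ ?_ (fun h => hT.irrefl w (hwG w h))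
    ?_ ?_ ?_ ?_ (hT.ne_of_beats hmx) ?_ haG hwG hmx
  all_goals grind [hT.asymm]

theorem card_le_card_filter_forall_add_sum (hT : IsTournament beats) {A B : Finset V}
    (hAB : Disjoint A B) :
    #A ≤ #(A.filter fun w => ∀ v ∈ B, beats w v) + ∑ v ∈ B, #(A.filter (beats v)) := by
  have hsub : A ⊆ (A.filter fun w => ∀ v ∈ B, beats w v) ∪
      B.biUnion (fun v => A.filter (beats v)) := by
    intro w hw
    by_cases h : ∀ v ∈ B, beats w v
    · exact mem_union_left _ (mem_filter.2 ⟨hw, h⟩)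
    push Not at h
    obtain ⟨v, hv, hwv⟩ := h
    have hvw : beats v w := hT.beats_of_not_beats (fun h => disjoint_left.1 hAB hw (h ▸ hv)) hwv
    exact mem_union_right _ (mem_biUnion.2 ⟨v, hv, mem_filter.2 ⟨hw, hvw⟩⟩)
  exact (card_le_card hsub).trans
    ((card_union_le _ _).trans (Nat.add_le_add_left card_biUnion_le _))

theorem hasKArySpanningTree_of_arc_inNbrs (hT : IsTournament beats)
    (hV : Fintype.card V = 2 * k + 2) (hk : 1 ≤ k) {m x : V} {j : ℕ} (hj : 0 < j)
    (hm : m ∈ N⁻) (hx : x ∈ N⁻) (hmx : beats m x) (hcard : j + #N⁻ = k + 1)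
    (hsum : 2 * j + ∑ v ∈ N⁻.erase x, #(N⁺.filter (beats v)) ≤ #N⁺) :
    HasKArySpanningTree beats k := by
  have hW := hT.card_le_card_filter_forall_add_sum
    (disjoint_of_subset_right (erase_subset x _) (hT.disjoint_outNbrs_inNbrs a))
  obtain ⟨w, hw, F, hFW, hF, hwF⟩ :=
    hT.exists_subset_forall_beats hj (Nat.le_of_add_le_add_right (hsum.trans hW))
  rw [mem_filter] at hw
  exact hT.hasKArySpanningTree_of_outNbr_hub hV hk hw.1 hm hx hmx
    (fun v hv hvx => hw.2 v (mem_erase.2 ⟨hvx, hv⟩)) (hFW.trans (filter_subset _ _)) hwF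
    (by omega)

theorem hasKArySpanningTree_of_inNbr_root (hT : IsTournament beats)
    (hV : Fintype.card V = 2 * k + 2) (hk : 1 ≤ k) {r e x : V} {F : Finset V}
    (hr : r ∈ N⁻) (hF : F ⊆ N⁺.filter (beats r))
    (hrB : ∀ v ∈ N⁻, v ≠ r → v ≠ x → beats r v)
    (he : e ∈ N⁺) (hex : beats e x) (hxr : x ≠ r) (hG : #((N⁺ \ F).erase x) = k) :
    HasKArySpanningTree beats k := by
  have hrG : ∀ v, v ≠ r → v ≠ x → v ∉ (N⁺ \ F).erase x → beats r v := by
    intro v hvr hvx hvG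
    obtain rfl | hva := eq_or_ne v a
    · exact mem_inNbrs.1 hr
    rcases hT.mem_outNbrs_or_mem_inNbrs hva with hv | hv
    · exact (mem_filter.1 (hF (by simpa [hvx, hv] using hvG))).2
    · exact hrB v hv hvr hvx
  simp only [mem_outNbrs, mem_inNbrs] at hr he hrB
  refine hasKArySpanningTree_of_hub (h := a) hV hk hG ?_ ?_ ?_ hxr.symm ?_ ?_ ?_
    (hT.ne_of_beats hex) ?_ hrG ?_ hex
  all_goals grind [hT.asymm, mem_outNbrs]

theorem hasKArySpanningTree_of_dominating_inNbr (hT : IsTournament beats)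
    (hV : Fintype.card V = 2 * k + 2) (hk : 1 ≤ k) {r : V} {F : Finset V}
    (hr : r ∈ N⁻) (hrB : ∀ v ∈ N⁻, v ≠ r → beats r v)
    (hF : F ⊆ N⁺.filter (beats r)) (hcard : #F + #N⁻ = k) :
    HasKArySpanningTree beats k := by
  have hAF : #(N⁺ \ F) = k + 1 := by
    have := hT.card_outNbrs_add_card_inNbrs a
    rw [card_sdiff_of_subset (hF.trans (filter_subset _ _))]
    omega
  obtain ⟨e, he, x, hx, hex⟩ := hT.exists_beats_of_one_lt_card (S := N⁺ \ F) (by omega)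
  have hxA := (mem_sdiff.1 hx).1
  exact hT.hasKArySpanningTree_of_inNbr_root hV hk hr hF (fun v hv hvr _ => hrB v hv hvr)
    (mem_sdiff.1 he).1 hex (fun h => disjoint_left.1 (hT.disjoint_outNbrs_inNbrs a) hxA (h ▸ hr))
    (by rw [card_erase_of_mem hx]; omega)

theorem hasKArySpanningTree_of_almost_dominating_inNbr (hT : IsTournament beats)
    (hV : Fintype.card V = 2 * k + 2) (hk : 1 ≤ k) (hmax : ∀ u, #(outNbrs beats u) ≤ #N⁺)
    {r : V} {F : Finset V} (hr : r ∈ N⁻) (hB : 1 < #N⁻)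
    (hrB : #N⁻ ≤ #(N⁻.filter (beats r)) + 2)
    (hF : F ⊆ N⁺.filter (beats r)) (hcard : #F + #N⁻ = k + 1) :
    HasKArySpanningTree beats k := by
  obtain ⟨x, hx, hxr, hrx⟩ :
      ∃ x ∈ N⁻, x ≠ r ∧ ∀ v ∈ N⁻, v ≠ r → v ≠ x → beats r v := by
    by_cases hdom : ∀ v ∈ N⁻, v ≠ r → beats r v
    · obtain ⟨x, hx, hxr⟩ := exists_mem_ne hB r
      exact ⟨x, hx, hxr, fun v hv hvr _ => hdom v hv hvr⟩
    push Not at hdom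
    obtain ⟨x, hx, hxr, hrx⟩ := hdom
    refine ⟨x, hx, hxr, fun v hv hvr hvx => ?_⟩
    -- `r` beats at least `#N⁻ - 2` vertices of `N⁻`, none of which is `r` or `x`
    have heq := eq_of_subset_of_card_le (hT.filter_beats_subset_erase_erase (S := N⁻) hrx) (by
      rw [card_erase_of_mem (mem_erase.2 ⟨hxr, hx⟩), card_erase_of_mem hr]
      omega)
    have hv' : v ∈ (N⁻.erase r).erase x := mem_erase.2 ⟨hvx, mem_erase.2 ⟨hvr, hv⟩⟩
    rw [← heq] at hv'
    exact (mem_filter.1 hv').2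
  obtain ⟨e, he, hex⟩ := hT.exists_beats_of_mem_inNbrs hmax hx
  have hxA : x ∉ N⁺ \ F :=
    fun h => disjoint_left.1 (hT.disjoint_outNbrs_inNbrs a) (mem_sdiff.1 h).1 hx
  have := hT.card_outNbrs_add_card_inNbrs a
  exact hT.hasKArySpanningTree_of_inNbr_root hV hk hr hF hrx he hex hxr
    (by rw [erase_eq_of_notMem hxA, card_sdiff_of_subset (hF.trans (filter_subset _ _))]; omega)

theorem hasKArySpanningTree_of_forall_beats (hT : IsTournament beats)
    (hV : Fintype.card V = 2 * k + 2) (hk : 2 ≤ k) (ha : ∀ v, v ≠ a → beats a v) :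
    HasKArySpanningTree beats k := by
  have hA : #(univ.erase a) = 2 * k + 1 := by
    rw [card_erase_of_mem (mem_univ a), card_univ]
    omega
  obtain ⟨h, hh, G, hGA, hG, hhG⟩ := hT.exists_subset_forall_beats (S := univ.erase a) (m := k)
    (by omega) (by omega)
  have hhG' : h ∉ G := fun hg => hT.irrefl h (hhG h hg)
  have hP : #(univ.erase a \ insert h G) = k := by
    rw [card_sdiff_of_subset (insert_subset hh hGA), card_insert_of_notMem hhG']
    omega
  obtain ⟨e, he, x, hx, hex⟩ := hT.exists_beats_of_one_lt_card (S := univ.erase a \ insert h G)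
    (by omega)
  refine hasKArySpanningTree_of_hub (r := a) hV (by omega) hG ?_ ?_ hhG' ?_ ?_ ?_ ?_
    (hT.ne_of_beats hex) ?_ (fun v hva _ _ => ha v hva) hhG hex
  all_goals grind

theorem hasKArySpanningTree_four_of_card_inNbrs_eq_one (hT : IsTournament beats)
    (hV : Fintype.card V = 10) (hB : #N⁻ = 1) :
    HasKArySpanningTree beats 4 := by
  obtain ⟨u, hBu⟩ := card_eq_one.1 hB
  have hu : u ∈ N⁻ := hBu ▸ mem_singleton_self u
  have hA : #N⁺ = 8 := by have := hT.card_outNbrs_add_card_inNbrs a; omega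
  by_cases hdeg : 3 ≤ #(N⁺.filter (beats u))
  · obtain ⟨F, hF, hFcard⟩ := exists_subset_card_eq hdeg
    exact hT.hasKArySpanningTree_of_dominating_inNbr (k := 4) hV (by norm_num) hu
      (by simp [hBu]) hF (by omega)
  -- otherwise the root is a `w ∈ N⁺` beating `u` and three more vertices, with `w → u → a`
  have hsplit := card_filter_add_card_filter_not (s := N⁺) (beats u)
  obtain ⟨w, hw, C, hCW, hC, hwC⟩ := hT.exists_subset_forall_beats
    (S := N⁺.filter fun w => ¬ beats u w) (m := 3) (by norm_num) (by omega)
  rw [mem_filter] at hw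
  have hwu : beats w u := hT.beats_of_not_beats
    (fun h => disjoint_left.1 (hT.disjoint_outNbrs_inNbrs a) hw.1 (h ▸ hu)) hw.2
  have hCA : C ⊆ N⁺ := hCW.trans (filter_subset _ _)
  have hwC' : w ∉ C := fun h => hT.irrefl w (hwC w h)
  have hG : #(N⁺ \ insert w C) = 4 := by
    rw [card_sdiff_of_subset (insert_subset hw.1 hCA), card_insert_of_notMem hwC', hC, hA]
  have hv : ∀ v, v ≠ a → v ∈ N⁺ ∨ v = u := fun v hva => by
    simpa [hBu] using hT.mem_outNbrs_or_mem_inNbrs hva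
  have hwA := mem_outNbrs.1 hw.1
  simp only [mem_outNbrs, mem_inNbrs] at hu hv
  refine hasKArySpanningTree_of_hub (r := w) (h := a) (e := u) (x := a) hV (by norm_num) hG
    ?_ ?_ ?_ ?_ ?_ ?_ ?_ ?_ ?_ ?_ ?_ hu
  all_goals grind [hT.asymm, mem_outNbrs]

theorem hasKArySpanningTree_four_of_card_inNbrs_eq_two (hT : IsTournament beats)
    (hV : Fintype.card V = 10) (hB : #N⁻ = 2) :
    HasKArySpanningTree beats 4 := by
  have hA : #N⁺ = 7 := by have := hT.card_outNbrs_add_card_inNbrs a; omega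
  suffices key : ∀ p q, N⁻ = {p, q} → beats p q → HasKArySpanningTree beats 4 by
    obtain ⟨p, q, hpq, hBpq⟩ := card_eq_two.1 hB
    rcases hT.beats_or_beats hpq with h | h
    exacts [key p q hBpq h, key q p (hBpq.trans (pair_comm p q)) h]
  intro p q hBpq hpq
  have hp : p ∈ N⁻ := by simp [hBpq]
  have hq : q ∈ N⁻ := by simp [hBpq]
  by_cases hdeg : 2 ≤ #(N⁺.filter (beats p))
  · obtain ⟨F, hF, hFcard⟩ := exists_subset_card_eq hdeg
    exact hT.hasKArySpanningTree_of_dominating_inNbr (k := 4) hV (by norm_num) hp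
      (by simp [hBpq, hpq]) hF (by omega)
  have hBq : N⁻.erase q = {p} := by
    rw [hBpq, erase_insert_of_ne (hT.ne_of_beats hpq), erase_singleton, insert_empty_eq]
  have hsum : ∑ v ∈ N⁻.erase q, #(N⁺.filter (beats v)) ≤ 1 := by
    rw [hBq, sum_singleton]
    omega
  exact hT.hasKArySpanningTree_of_arc_inNbrs (k := 4) (j := 3) hV (by norm_num) (by norm_num)
    hp hq hpq (by omega) (by omega)

theorem hasKArySpanningTree_four_of_card_inNbrs_eq_three (hT : IsTournament beats)
    (hV : Fintype.card V = 10) (hmax : ∀ u, #(outNbrs beats u) ≤ #N⁺) (hB : #N⁻ = 3) :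
    HasKArySpanningTree beats 4 := by
  have hA : #N⁺ = 6 := by have := hT.card_outNbrs_add_card_inNbrs a; omega
  by_cases hII : ∃ r ∈ N⁻, 1 ≤ #(N⁻.filter (beats r)) ∧ 2 ≤ #(N⁺.filter (beats r))
  · obtain ⟨r, hr, hrB, hdeg⟩ := hII
    obtain ⟨F, hF, hFcard⟩ := exists_subset_card_eq hdeg
    exact hT.hasKArySpanningTree_of_almost_dominating_inNbr (k := 4) hV (by norm_num) hmax hr
      (by omega) (by omega) hF (by omega)
  push Not at hII
  obtain ⟨y, hy, hyB⟩ := hT.exists_card_le_two_mul_card_filter_add_one (S := N⁻)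
    (card_pos.1 (by omega))
  obtain ⟨p, q, hpq, hBy⟩ := card_eq_two.1 (show #(N⁻.erase y) = 2 by
    rw [card_erase_of_mem hy]; omega)
  suffices key : ∀ m x, N⁻.erase y = {m, x} → beats m x → HasKArySpanningTree beats 4 by
    rcases hT.beats_or_beats hpq with h | h
    exacts [key p q hBy h, key q p (hBy.trans (pair_comm p q)) h]
  intro m x hBy hmx
  have hm : m ∈ N⁻ := mem_of_mem_erase (hBy ▸ mem_insert_self m {x})
  have hx : x ∈ N⁻ := mem_of_mem_erase (hBy ▸ mem_insert_of_mem (mem_singleton_self x))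
  -- `m` and `y` both beat a vertex of `N⁻`, hence at most one vertex of `N⁺` each
  have hsum : ∑ v ∈ N⁻.erase x, #(N⁺.filter (beats v)) ≤ #(N⁻.erase x) • 1 := by
    refine sum_le_card_nsmul _ _ _ fun v hv => ?_
    obtain ⟨hvx, hv⟩ := mem_erase.1 hv
    obtain rfl | hvy := eq_or_ne v y
    · exact Nat.le_of_lt_succ (hII v hv (by omega))
    · obtain rfl : v = m := by simpa [hBy, hvx] using mem_erase.2 ⟨hvy, hv⟩
      exact Nat.le_of_lt_succ (hII v hv (card_pos.2 ⟨x, mem_filter.2 ⟨hx, hmx⟩⟩))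
  rw [card_erase_of_mem hx, smul_eq_mul] at hsum
  exact hT.hasKArySpanningTree_of_arc_inNbrs (k := 4) (j := 2) hV (by norm_num) (by norm_num)
    hm hx hmx (by omega) (by omega)

theorem hasKArySpanningTree_four_of_card_inNbrs_eq_four (hT : IsTournament beats)
    (hV : Fintype.card V = 10) (hmax : ∀ u, #(outNbrs beats u) ≤ #N⁺) (hB : #N⁻ = 4) :
    HasKArySpanningTree beats 4 := by
  have hA : #N⁺ = 5 := by have := hT.card_outNbrs_add_card_inNbrs a; omega
  by_cases hI : ∃ r ∈ N⁻, ∀ v ∈ N⁻, v ≠ r → beats r v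
  · obtain ⟨r, hr, hrB⟩ := hI
    exact hT.hasKArySpanningTree_of_dominating_inNbr (k := 4) (F := ∅) hV (by norm_num) hr hrB
      (empty_subset _) (by simp [hB])
  by_cases hII : ∃ r ∈ N⁻, 2 ≤ #(N⁻.filter (beats r)) ∧ 1 ≤ #(N⁺.filter (beats r))
  · obtain ⟨r, hr, hrB, hdeg⟩ := hII
    obtain ⟨F, hF, hFcard⟩ := exists_subset_card_eq hdeg
    exact hT.hasKArySpanningTree_of_almost_dominating_inNbr (k := 4) hV (by norm_num) hmax hr
      (by omega) (by omega) hF (by omega)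
  push Not at hI hII
  have hscore : ∀ r ∈ N⁻, #(N⁻.filter (beats r)) ≤ 2 := by
    intro r hr
    obtain ⟨v, hv, hvr, hrv⟩ := hI r hr
    have := card_le_card (hT.filter_beats_subset_erase_erase (S := N⁻) hrv)
    rw [card_erase_of_mem (mem_erase.2 ⟨hvr, hv⟩), card_erase_of_mem hr] at this
    omega
  -- the out-degrees inside `N⁻` sum to `6` and are at most `2`, so two of them are `2`
  have hR : 1 < #(N⁻.filter fun r => 2 ≤ #(N⁻.filter (beats r))) := by
    have h2 := hT.two_mul_sum_card_filter N⁻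
    have hle : ∑ r ∈ N⁻, #(N⁻.filter (beats r)) ≤
        ∑ r ∈ N⁻, (1 + if 2 ≤ #(N⁻.filter (beats r)) then 1 else 0) :=
      sum_le_sum fun r hr => by have := hscore r hr; split_ifs <;> omega
    rw [sum_add_distrib, sum_const, smul_eq_mul, mul_one, sum_boole, Nat.cast_id] at hle
    rw [hB] at h2 hle
    omega
  obtain ⟨r₁, hr₁, r₂, hr₂, hr₁₂⟩ := one_lt_card.1 hR
  rw [mem_filter] at hr₁ hr₂
  have hpair : #((N⁻.erase r₁).erase r₂) = 2 := by
    rw [card_erase_of_mem (mem_erase.2 ⟨hr₁₂.symm, hr₂.1⟩), card_erase_of_mem hr₁.1]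
    omega
  suffices key : ∀ s t, (N⁻.erase r₁).erase r₂ = {s, t} → beats s t →
      HasKArySpanningTree beats 4 by
    obtain ⟨s, t, hst, hpair⟩ := card_eq_two.1 hpair
    rcases hT.beats_or_beats hst with h | h
    exacts [key s t hpair h, key t s (hpair.trans (pair_comm s t)) h]
  intro s t hpair hst
  have hs : s ∈ N⁻ := mem_of_mem_erase (mem_of_mem_erase (hpair ▸ mem_insert_self s {t}))
  have ht : t ∈ N⁻ :=
    mem_of_mem_erase (mem_of_mem_erase (hpair ▸ mem_insert_of_mem (mem_singleton_self t)))
  have hsum : ∑ v ∈ N⁻.erase t, #(N⁺.filter (beats v)) = #(N⁺.filter (beats s)) := by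
    refine sum_eq_single_of_mem s (mem_erase.2 ⟨hT.ne_of_beats hst, hs⟩) fun v hv hvs => ?_
    obtain ⟨hvt, hv⟩ := mem_erase.1 hv
    have hv₁₂ : v = r₁ ∨ v = r₂ := by
      by_contra! h
      have : v ∈ (N⁻.erase r₁).erase r₂ := by simp [h.1, h.2, hv]
      simp [hpair, hvs, hvt] at this
    obtain rfl | rfl := hv₁₂
    exacts [Nat.lt_one_iff.1 (hII v hv hr₁.2), Nat.lt_one_iff.1 (hII v hv hr₂.2)]
  have hweak := hT.card_filter_add_card_filter_lt hmax hs
  have hst' : 0 < #(N⁻.filter (beats s)) := card_pos.2 ⟨t, mem_filter.2 ⟨ht, hst⟩⟩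
  exact hT.hasKArySpanningTree_of_arc_inNbrs (k := 4) (j := 1) hV (by norm_num) (by norm_num)
    hs ht hst (by omega) (by omega)

end IsTournament

end

/-- Every tournament on 10 vertices contains a 4-ary spanning tree. -/
theorem stmt10 (W : Type*) [Fintype W] [DecidableEq W]
    (hcard : Fintype.card W = 10)
    (beats : W → W → Prop) (hT : IsTournament beats) :
    HasKArySpanningTree beats 4 := by
  classical
  have : Nonempty W := Fintype.card_pos_iff.1 (by omega)
  obtain ⟨a, -, hmax⟩ := univ.exists_max_image (fun v => #(outNbrs beats v)) univ_nonempty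
  replace hmax : ∀ v, #(outNbrs beats v) ≤ #(outNbrs beats a) := fun v => hmax v (mem_univ v)
  have hA : #(univ : Finset W) ≤ 2 * #(outNbrs beats a) + 1 :=
    hT.card_le_two_mul_card_filter_add_one fun u _ => hmax u
  have hB4 : #(inNbrs beats a) ≤ 4 := by
    have := hT.card_outNbrs_add_card_inNbrs a
    rw [card_univ] at hA
    omega
  interval_cases hB : #(inNbrs beats a)
  · refine hT.hasKArySpanningTree_of_forall_beats (k := 4) (a := a) hcard (by norm_num)
      fun v hv => ?_
    simpa [card_eq_zero.1 hB] using hT.mem_outNbrs_or_mem_inNbrs hv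
  · exact hT.hasKArySpanningTree_four_of_card_inNbrs_eq_one hcard hB
  · exact hT.hasKArySpanningTree_four_of_card_inNbrs_eq_two hcard hB
  · exact hT.hasKArySpanningTree_four_of_card_inNbrs_eq_three hcard hmax hB
  · exact hT.hasKArySpanningTree_four_of_card_inNbrs_eq_four hcard hmax hB
end

section
/- If for every n there exists a tournament on n vertices with domination number greater than c·log n (for some constant c > 0), then h(k) = Ω(k log k); that is, there exists a constant c' > 0 such that for all sufficiently large k there is a tournament on more than c'·k·log k vertices with no k-ary spanning tree. -/
/-- The domination number of a tournament: the minimum size of a set `X` such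
that every vertex outside `X` is beaten by some member of `X`. -/
noncomputable def domNumber {V : Type*} [Fintype V] (beats : V → V → Prop) : ℕ :=
  sInf {m : ℕ | ∃ X : Finset V, X.card = m ∧ ∀ v : V, v ∉ X → ∃ u ∈ X, beats u v}

/-! The root together with the non-leaf vertices of a `k`-ary spanning tree dominates the
tournament, and all non-leaves but one have exactly `k` children, so `μ(T) · k ≤ n + 2k`.
Take `n ≈ (c/2) · k · log k` and an `n`-vertex tournament with `μ(T) > c · log n ≥ c · log k`:
then `μ(T) · k > c · k · log k > n + 2k` once `log k` is large, so `T` has no `k`-ary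
spanning tree, while `n > (c/4) · k · log k`. -/

open Finset Filter

section Tree

variable {V : Type*} [Fintype V]

def IsDominating (beats : V → V → Prop) (X : Finset V) : Prop :=
  ∀ v, v ∉ X → ∃ u ∈ X, beats u v

lemma domNumber_le_card {beats : V → V → Prop} {X : Finset V} (hX : IsDominating beats X) :
    domNumber beats ≤ #X :=
  Nat.sInf_le ⟨X, rfl, hX⟩

variable [DecidableEq V]

def childrenOf (root : V) (parent : V → V) (v : V) : Finset V :=
  {w | w ≠ root ∧ parent w = v}

def internalVertices (root : V) (parent : V → V) : Finset V :=
  {v | (childrenOf root parent v).Nonempty}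

lemma sum_card_childrenOf (root : V) (parent : V → V) :
    ∑ v, #(childrenOf root parent v) = Fintype.card V - 1 := by
  rw [← card_univ, ← card_erase_of_mem (mem_univ root), card_eq_sum_card_fiberwise (f := parent)
    (t := univ) fun _ _ => mem_coe.2 (mem_univ _)]
  congr! with v
  ext w
  simp [childrenOf, and_comm]

lemma isDominating_insert_root_internalVertices {beats : V → V → Prop} {root : V}
    {parent : V → V} (hbeats : ∀ v, v ≠ root → beats (parent v) v) :
    IsDominating beats (insert root (internalVertices root parent)) := by
  intro v hv
  have hv_root : v ≠ root := fun h => hv (h ▸ mem_insert_self _ _)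
  refine ⟨parent v, mem_insert_of_mem ?_, hbeats v hv_root⟩
  simp only [internalVertices, mem_filter, mem_univ, true_and]
  exact ⟨v, by simp [childrenOf, hv_root]⟩

lemma IsKAryTreeOn.domNumber_mul_le {beats : V → V → Prop} {k : ℕ} {root : V}
    {parent : V → V} (h : IsKAryTreeOn beats k univ root parent) :
    domNumber beats * k ≤ Fintype.card V + 2 * k := by
  obtain ⟨-, -, -, hbeats, -, e, -, -, hfull⟩ := h
  set I := internalVertices root parent
  have hμ : domNumber beats ≤ #(I.erase e) + 2 := calc
    domNumber beats ≤ #(insert root I) :=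
      domNumber_le_card (isDominating_insert_root_internalVertices fun v => hbeats v (mem_univ v))
    _ ≤ #I + 1 := card_insert_le _ _
    _ ≤ #(I.erase e) + 2 := by have := pred_card_le_card_erase (s := I) (a := e); omega
  have hcount : #(I.erase e) * k ≤ Fintype.card V - 1 := calc
    #(I.erase e) * k = ∑ v ∈ I.erase e, #(childrenOf root parent v) := by
      rw [sum_const_nat]
      intro v hv
      obtain ⟨hve, hvI⟩ := mem_erase.1 hv
      refine (hfull v (mem_univ v) hve).resolve_right fun h0 => ?_
      simp only [I, internalVertices, mem_filter, mem_univ, true_and] at hvI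
      exact hvI.ne_empty (card_eq_zero.1 h0)
    _ ≤ ∑ v, #(childrenOf root parent v) := sum_le_sum_of_subset (subset_univ _)
    _ = Fintype.card V - 1 := sum_card_childrenOf root parent
  calc domNumber beats * k ≤ (#(I.erase e) + 2) * k := Nat.mul_le_mul_right k hμ
    _ ≤ Fintype.card V + 2 * k := by rw [add_mul]; omega

lemma HasKArySpanningTree.domNumber_mul_le {beats : V → V → Prop} {k : ℕ}
    (h : HasKArySpanningTree beats k) : domNumber beats * k ≤ Fintype.card V + 2 * k :=
  let ⟨_, _, htree⟩ := h
  htree.domNumber_mul_le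

end Tree

lemma eventually_exists_nat_window {c : ℝ} (hc : 0 < c) :
    ∀ᶠ k : ℕ in atTop, 0 < k ∧ ∃ n : ℕ, k ≤ n ∧
      c / 4 * k * Real.log k < n ∧ (n : ℝ) + 2 * k < c * k * Real.log k := by
  have hlog : ∀ᶠ k : ℕ in atTop, 6 / c ≤ Real.log k :=
    (Real.tendsto_log_atTop.comp tendsto_natCast_atTop_atTop).eventually_ge_atTop _
  filter_upwards [hlog, eventually_gt_atTop 0] with k hk_log hk
  have hk1 : (1 : ℝ) ≤ k := by exact_mod_cast hk
  have hlog3 : 3 ≤ c / 2 * Real.log k := by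
    have := mul_le_mul_of_nonneg_left hk_log (by positivity : (0 : ℝ) ≤ c / 2)
    rwa [show c / 2 * (6 / c) = 3 by field_simp; norm_num] at this
  set x := c / 2 * k * Real.log k
  have hx : 3 * k ≤ x := by simp only [x]; nlinarith
  have hn_ge : x ≤ ⌈x⌉₊ := Nat.le_ceil x
  have hn_lt : (⌈x⌉₊ : ℝ) < x + 1 := Nat.ceil_lt_add_one (by linarith)
  have hquarter : c / 4 * k * Real.log k = x / 2 := by ring
  have hfull : c * k * Real.log k = 2 * x := by ring
  refine ⟨hk, ⌈x⌉₊, ?_, ?_, ?_⟩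
  · exact_mod_cast (show (k : ℝ) ≤ ⌈x⌉₊ by linarith)
  · linarith
  · linarith

/-- If for every `n ≥ 1` there is an `n`-vertex tournament of domination number
greater than `c·log n`, then `h(k) = Ω(k log k)`: there is `c' > 0` such that
for all sufficiently large `k` some tournament on more than `c'·k·log k`
vertices has no `k`-ary spanning tree. -/
theorem stmt19
    (H : ∃ c : ℝ, 0 < c ∧ ∀ n : ℕ, 1 ≤ n →
      ∃ beats : Fin n → Fin n → Prop, IsTournament beats ∧
        c * Real.log n < (domNumber beats : ℝ)) :
    ∃ c' : ℝ, 0 < c' ∧ ∃ K : ℕ, ∀ k : ℕ, K ≤ k →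
      ∃ (n : ℕ) (beats : Fin n → Fin n → Prop), IsTournament beats ∧
        c' * k * Real.log k < (n : ℝ) ∧ ¬ HasKArySpanningTree beats k := by
  obtain ⟨c, hc, H⟩ := H
  obtain ⟨K, hK⟩ := eventually_atTop.1 (eventually_exists_nat_window hc)
  refine ⟨c / 4, by positivity, K, fun k hkK => ?_⟩
  obtain ⟨hk, n, hkn, hlow, hhigh⟩ := hK k hkK
  obtain ⟨beats, htour, hdom⟩ := H n (hk.trans_le hkn)
  refine ⟨n, beats, htour, hlow, fun htree => ?_⟩
  have hμ : (domNumber beats : ℝ) * k ≤ n + 2 * k := by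
    exact_mod_cast Fintype.card_fin n ▸ htree.domNumber_mul_le
  have hlog_le : Real.log k ≤ Real.log n :=
    Real.log_le_log (by exact_mod_cast hk) (by exact_mod_cast hkn)
  have hkpos : (0 : ℝ) < k := by exact_mod_cast hk
  nlinarith [mul_lt_mul_of_pos_right hdom hkpos, mul_le_mul_of_nonneg_left hlog_le hc.le]
end
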